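/- Suppose an n-arm b₁,…,bₙ in ℝ³ satisfies the parallel condition for all r = 2,…,n. If n is even, then b_r + b_{r+1} ∈ ℝ·b₁ for all r = 2,…,n−1. -/

import Mathlib

open Finset

section
variable {M : Type*} [AddCommGroup M]

/-- The vector that the parallel condition `P_r` requires to lie on the line `ℝ • b₁`. -/
def parallelDefect (b : ℕ → M) (n r : ℕ) : M :=
  ∑ i ∈ Icc 2 (r - 1), b i - ∑ i ∈ Icc (r + 1) n, b i

theorem parallelDefect_succ_sub (b : ℕ → M) {n r : ℕ} (hr : 2 ≤ r) (hrn : r + 1 ≤ n) :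
    parallelDefect b n (r + 1) - parallelDefect b n r = b r + b (r + 1) := by
  obtain ⟨k, rfl⟩ : ∃ k, r = k + 1 := ⟨r - 1, by omega⟩
  have hleft : ∑ i ∈ Icc 2 (k + 1), b i = ∑ i ∈ Icc 2 k, b i + b (k + 1) :=
    sum_Icc_succ_top (by omega) b
  have hright :
      ∑ i ∈ Icc (k + 1 + 1) n, b i = b (k + 1 + 1) + ∑ i ∈ Icc (k + 1 + 1 + 1) n, b i := by
    rw [← add_sum_Ioc_eq_sum_Icc hrn, Icc_add_one_left_eq_Ioc]
  simp only [parallelDefect, Nat.add_sub_cancel, hleft, hright]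
  abel

end

theorem stmt_10_general (n : ℕ) (b : ℕ → Fin 3 → ℝ)
    (hpar : ∀ r ∈ Finset.Icc 2 n, ∃ t : ℝ,
      (∑ i ∈ Finset.Icc 2 (r - 1), b i) - (∑ i ∈ Finset.Icc (r + 1) n, b i) = t • b 1) :
    ∀ r ∈ Finset.Icc 2 (n - 1), ∃ t : ℝ, b r + b (r + 1) = t • b 1 := by
  intro r hr
  obtain ⟨hr2, hrn⟩ := mem_Icc.mp hr
  obtain ⟨s, hs⟩ : ∃ s : ℝ, parallelDefect b n r = s • b 1 := hpar r (mem_Icc.mpr ⟨hr2, by omega⟩)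
  obtain ⟨t, ht⟩ : ∃ t : ℝ, parallelDefect b n (r + 1) = t • b 1 :=
    hpar (r + 1) (mem_Icc.mpr ⟨by omega, by omega⟩)
  refine ⟨t - s, ?_⟩
  rw [← parallelDefect_succ_sub b (n := n) hr2 (by omega), ht, hs, sub_smul]

/-- If an `n`-arm (`n` even) satisfies the parallel condition `P_r` for all
`r = 2, …, n`, then `b_r + b_{r+1}` is a scalar multiple of `b₁` for `2 ≤ r ≤ n-1`. -/
theorem stmt_10 (n : ℕ) (hn : Even n) (b : ℕ → Fin 3 → ℝ) (hb : b 1 ≠ 0)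
    (hpar : ∀ r ∈ Finset.Icc 2 n, ∃ t : ℝ,
      (∑ i ∈ Finset.Icc 2 (r - 1), b i) - (∑ i ∈ Finset.Icc (r + 1) n, b i) = t • b 1) :
    ∀ r ∈ Finset.Icc 2 (n - 1), ∃ t : ℝ, b r + b (r + 1) = t • b 1 :=
  stmt_10_general n b hpar
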